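/- Let D be odd, and let k, p, q ∈ ℤ_D. Then tr(Π_D · ω^k Z^p X^q) = ω^{k + 2^{-1}pq}, where 2^{-1} denotes the multiplicative inverse of 2 modulo D. In particular, for even D and q odd, tr(Π_D Z^p X^q) = 0. -/
import Mathlib


noncomputable section

/-- ω = exp(2πi/D). -/
noncomputable def rootOfUnity (D : ℕ) : ℂ := Complex.exp (2 * Real.pi * Complex.I / D)

/-- The boost operator `Z = Σ_j ω^j |j⟩⟨j|` on `ℂ^D`, as a matrix indexed by `ZMod D`. -/
noncomputable def ZMat (D : ℕ) : Matrix (ZMod D) (ZMod D) ℂ :=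
  Matrix.of fun i j => if i = j then rootOfUnity D ^ (ZMod.val j) else 0

/-- The shift operator `X = Σ_j |j+1⟩⟨j|` on `ℂ^D`, as a matrix indexed by `ZMod D`. -/
def XMat (D : ℕ) : Matrix (ZMod D) (ZMod D) ℂ :=
  Matrix.of fun i j => if i = j + 1 then 1 else 0

/-- The parity operator `Π_D = Σ_j |-j⟩⟨j|` on `ℂ^D`. -/
def parityMat (D : ℕ) : Matrix (ZMod D) (ZMod D) ℂ :=
  Matrix.of fun i j => if i = -j then 1 else 0

/-- A single-quDit generalized Pauli operator: any matrix of the form `ω^k Z^p X^q` with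
`k, p, q ∈ ℤ_D`. -/
def IsPauli1 (D : ℕ) [NeZero D] (σ : Matrix (ZMod D) (ZMod D) ℂ) : Prop :=
  ∃ k p q : ZMod D, σ = rootOfUnity D ^ k.val • (ZMat D ^ p.val * XMat D ^ q.val)

/-- The tensor product `σ₁ ⊗ ⋯ ⊗ σₙ` of `n` one-quDit matrices, as a matrix on
`(ℂ^D)^{⊗n}` indexed by `Fin n → ZMod D`. -/
noncomputable def tensorFun {D n : ℕ} (σs : Fin n → Matrix (ZMod D) (ZMod D) ℂ) :
    Matrix (Fin n → ZMod D) (Fin n → ZMod D) ℂ :=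
  Matrix.of fun f g => ∏ k, σs k (f k) (g k)

/-- An `n`-quDit generalized Pauli operator: a tensor product of `n` single-quDit
generalized Pauli operators. -/
def IsPauliN (D n : ℕ) [NeZero D]
    (σ : Matrix (Fin n → ZMod D) (Fin n → ZMod D) ℂ) : Prop :=
  ∃ σs : Fin n → Matrix (ZMod D) (ZMod D) ℂ, (∀ k, IsPauli1 D (σs k)) ∧ σ = tensorFun σs

end

set_option linter.unusedSectionVars false

section Aux
variable (D : ℕ) [NeZero D]

lemma rootOfUnity_pow_D : rootOfUnity D ^ D = 1 := by
  rw [rootOfUnity, ← Complex.exp_nat_mul]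
  have hD : (D : ℂ) ≠ 0 := Nat.cast_ne_zero.mpr (NeZero.ne D)
  rw [mul_div_cancel₀ _ hD, Complex.exp_two_pi_mul_I]

lemma rootOfUnity_pow_congr {m n : ℕ} (h : m ≡ n [MOD D]) :
    rootOfUnity D ^ m = rootOfUnity D ^ n := by
  have h1 : rootOfUnity D ^ m = rootOfUnity D ^ (m % D) := by
    conv_lhs => rw [← Nat.div_add_mod m D]
    rw [pow_add, pow_mul, rootOfUnity_pow_D, one_pow, one_mul]
  have h2 : rootOfUnity D ^ n = rootOfUnity D ^ (n % D) := by
    conv_lhs => rw [← Nat.div_add_mod n D]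
    rw [pow_add, pow_mul, rootOfUnity_pow_D, one_pow, one_mul]
  rw [h1, h2, h]

lemma XMat_pow (m : ℕ) (i j : ZMod D) :
    (XMat D ^ m) i j = if i = j + (m : ZMod D) then 1 else 0 := by
  induction m generalizing i j with
  | zero => simp [Matrix.one_apply, eq_comm]
  | succ m ih =>
    rw [pow_succ, Matrix.mul_apply]
    have : ∀ l : ZMod D, (XMat D ^ m) i l * XMat D l j =
        if l = j + 1 then (XMat D ^ m) i (j+1) else 0 := by
      intro l
      simp only [XMat, Matrix.of_apply]
      split_ifs with h
      · rw [h, mul_one]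
      · rw [mul_zero]
    rw [Finset.sum_congr rfl (fun l _ => this l), Finset.sum_ite_eq' Finset.univ (j+1),
      if_pos (Finset.mem_univ _), ih]
    congr 1
    push_cast
    ring_nf

lemma ZMat_eq_diagonal :
    ZMat D = Matrix.diagonal (fun j => rootOfUnity D ^ (ZMod.val j)) := by
  ext i j
  simp only [ZMat, Matrix.of_apply, Matrix.diagonal_apply]
  split_ifs with h
  · rw [h]
  · rfl

lemma ZX_apply (p q : ℕ) (i j : ZMod D) :
    (ZMat D ^ p * XMat D ^ q) i j =
      (rootOfUnity D ^ i.val) ^ p * (if i = j + (q : ZMod D) then 1 else 0) := by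
  rw [ZMat_eq_diagonal, Matrix.diagonal_pow, Matrix.diagonal_mul, XMat_pow]
  rw [Pi.pow_apply]

lemma parity_trace (M : Matrix (ZMod D) (ZMod D) ℂ) :
    (parityMat D * M).trace = ∑ j : ZMod D, M (-j) j := by
  rw [Matrix.trace]
  refine Finset.sum_congr rfl fun j _ => ?_
  rw [Matrix.diag_apply, Matrix.mul_apply]
  have : ∀ i : ZMod D, parityMat D j i * M i j = if i = -j then M (-j) j else 0 := by
    intro i
    simp only [parityMat, Matrix.of_apply]
    split_ifs with h h2 h2
    · rw [h2, one_mul]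
    · exact absurd (by rw [h, neg_neg]) h2
    · exact absurd (by rw [h2, neg_neg] : j = -i) h
    · rw [zero_mul]
  rw [Finset.sum_congr rfl (fun i _ => this i), Finset.sum_ite_eq' Finset.univ (-j),
    if_pos (Finset.mem_univ _)]

end Aux

/-- for `D` odd and `k, p, q ∈ ℤ_D`,
`tr(Π_D · ω^k Z^p X^q) = ω^{k + 2⁻¹ p q}` where `2⁻¹` is the inverse of 2 mod `D`;
and for `D` even and `q` odd, `tr(Π_D Z^p X^q) = 0`. -/

theorem parity_trace_of_pauli (D : ℕ) [NeZero D] :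
    (Odd D → ∀ k p q : ZMod D,
      (parityMat D * (rootOfUnity D ^ k.val • (ZMat D ^ p.val * XMat D ^ q.val))).trace
        = rootOfUnity D ^ (k + (2 : ZMod D)⁻¹ * p * q).val) ∧
    (Even D → ∀ p q : ZMod D, Odd q.val →
      (parityMat D * (ZMat D ^ p.val * XMat D ^ q.val)).trace = 0) := by
  constructor
  · intro hD k p q
    have h2 : IsUnit (2 : ZMod D) := by
      rw [show (2 : ZMod D) = ((2 : ℕ) : ZMod D) by norm_num]
      exact (ZMod.isUnit_iff_coprime 2 D).mpr (Nat.coprime_two_left.mpr hD)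
    have hinv : (2 : ZMod D)⁻¹ * 2 = 1 := ZMod.inv_mul_of_unit _ h2
    rw [Matrix.mul_smul, Matrix.trace_smul, parity_trace]
    have key : ∀ j : ZMod D, (ZMat D ^ p.val * XMat D ^ q.val) (-j) j =
        if j = (2 : ZMod D)⁻¹ * (-q) then (rootOfUnity D ^ ((2:ZMod D)⁻¹ * q).val) ^ p.val
        else 0 := by
      intro j
      rw [ZX_apply]
      have hq : ((q.val : ℕ) : ZMod D) = q := by simp [ZMod.natCast_val, ZMod.cast_id]
      rw [hq]
      have hcond : (-j = j + q) ↔ j = (2 : ZMod D)⁻¹ * (-q) := by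
        constructor
        · intro h
          have : (2 : ZMod D) * j = -q := by linear_combination -h
          calc j = ((2:ZMod D)⁻¹ * 2) * j := by rw [hinv, one_mul]
          _ = (2:ZMod D)⁻¹ * (-q) := by rw [mul_assoc, this]
        · intro h
          have h2j : (2 : ZMod D) * j = -q := by
            rw [h, ← mul_assoc, mul_comm (2:ZMod D), hinv, one_mul]
          linear_combination -h2j
      split_ifs with h1 h3 h3
      · rw [mul_one, h3, show -((2:ZMod D)⁻¹ * -q) = (2:ZMod D)⁻¹ * q from by ring]
      · exact absurd (hcond.mp h1) h3
      · exact absurd (hcond.mpr h3) h1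
      · rw [mul_zero]
    rw [Finset.sum_congr rfl (fun j _ => key j), Finset.sum_ite_eq' Finset.univ,
      if_pos (Finset.mem_univ _), smul_eq_mul, ← pow_mul, ← pow_add]
    refine rootOfUnity_pow_congr D ?_
    rw [← ZMod.natCast_eq_natCast_iff]
    push_cast [ZMod.natCast_val, ZMod.cast_id]
    ring
  · intro hD p q hq
    rw [parity_trace]
    refine Finset.sum_eq_zero fun j _ => ?_
    rw [ZX_apply]
    have hq' : ((q.val : ℕ) : ZMod D) = q := by simp [ZMod.natCast_val, ZMod.cast_id]
    rw [hq', if_neg, mul_zero]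
    intro h
    have hdvd : (2 : ℕ) ∣ D := hD.two_dvd
    have hQ : q = -(j + j) := by linear_combination -h
    have := congrArg (ZMod.castHom hdvd (ZMod 2)) hQ
    rw [map_neg, map_add] at this
    set x := ZMod.castHom hdvd (ZMod 2) j
    have hx : x + x = 0 := by
      have : (2 : ZMod 2) = 0 := by decide
      calc x + x = 2 * x := by ring
      _ = 0 := by rw [this, zero_mul]
    rw [hx, neg_zero] at this
    have hcast : ZMod.castHom hdvd (ZMod 2) q = ((q.val : ℕ) : ZMod 2) := by
      simp [ZMod.natCast_val]
    rw [hcast] at this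
    rw [Nat.odd_iff] at hq
    rw [← ZMod.natCast_mod q.val 2, hq, Nat.cast_one] at this
    exact one_ne_zero this
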